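/- arXiv:0902.0576 — 10 statements merged into one kernel-verified Lean document; each statement's English description precedes it below -/
import Mathlib

section
/- Let c = cos(2π/9). Let x and d be real numbers with 1 < x ≤ c/(2c − 1), and suppose cosh d ≥ 1 + 1/(x − 1). Then cosh(d/2) ≥ 1/√(2(1 − c)). (This is the computational core of Lemma 2.7: if cosh ℓ₁ ≤ cos(2π/9)/(2cos(2π/9) − 1), then the inequality cosh d₁₁ ≥ 1 + 1/(cosh ℓ₁ − 1) implies d₁₁ ≥ 2R″, where cosh R″ = 1/√(2(1 − cos(2π/9))).) -/
/-!
Since `x ↦ 1 + 1/(x - 1)` is decreasing on `(1, ∞)` and equals `c/(1 - c)` at `x = c/(2c - 1)`,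
the hypothesis gives `cosh d ≥ c/(1 - c)`. The half-angle formula `cosh² (d/2) = (1 + cosh d)/2`
then yields `cosh² (d/2) ≥ 1/(2(1 - c))`.
-/

open Real

lemma half_lt_cos_two_pi_div_nine : 1 / 2 < cos (2 * π / 9) := by
  rw [← cos_pi_div_three]
  exact cos_lt_cos_of_nonneg_of_le_pi (by positivity) (by linarith [pi_pos]) (by linarith [pi_pos])

lemma cos_two_pi_div_nine_lt_one : cos (2 * π / 9) < 1 := by
  rw [← cos_zero]
  exact cos_lt_cos_of_nonneg_of_le_pi le_rfl (by linarith [pi_pos]) (by positivity)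

lemma div_one_sub_le_one_add_one_div_sub_one {c x : ℝ} (hc : 1 / 2 < c) (hc1 : c < 1)
    (hx : 1 < x) (hxc : x ≤ c / (2 * c - 1)) : c / (1 - c) ≤ 1 + 1 / (x - 1) := by
  have hx' : x * (2 * c - 1) ≤ c := (le_div_iff₀ (by linarith)).mp hxc
  have h_eq : 1 + 1 / (x - 1) = x / (x - 1) := by
    field_simp [sub_ne_zero.mpr hx.ne']
    ring
  rw [h_eq, div_le_div_iff₀ (by linarith) (by linarith)]
  linarith

lemma cosh_half_sq (d : ℝ) : cosh (d / 2) ^ 2 = (1 + cosh d) / 2 := by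
  have h := cosh_two_mul (d / 2)
  rw [mul_div_cancel₀ d two_ne_zero, sinh_sq] at h
  linarith

lemma one_div_sqrt_le_cosh_half {c d : ℝ} (hc : c < 1) (hd : c / (1 - c) ≤ cosh d) :
    1 / √(2 * (1 - c)) ≤ cosh (d / 2) := by
  have h1c : 0 < 1 - c := by linarith
  have hsq : 1 / (2 * (1 - c)) ≤ cosh (d / 2) ^ 2 := by
    have h_eq : 1 / (2 * (1 - c)) = (1 + c / (1 - c)) / 2 := by field_simp; ring
    rw [cosh_half_sq, h_eq]
    linarith
  calc 1 / √(2 * (1 - c)) = √(1 / (2 * (1 - c))) := by rw [sqrt_div' _ (by positivity), sqrt_one]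
    _ ≤ √(cosh (d / 2) ^ 2) := sqrt_le_sqrt hsq
    _ = cosh (d / 2) := sqrt_sq (cosh_pos _).le

/-- Computational core of Lemma 2.7: with c = cos(2π/9), if 1 < x ≤ c/(2c − 1)
and cosh d ≥ 1 + 1/(x − 1), then cosh(d/2) ≥ 1/√(2(1 − c)). -/
theorem stmt_4 (x d : ℝ) (hx1 : 1 < x)
    (hx2 : x ≤ Real.cos (2 * Real.pi / 9) / (2 * Real.cos (2 * Real.pi / 9) - 1))
    (hd : Real.cosh d ≥ 1 + 1 / (x - 1)) :
    Real.cosh (d / 2) ≥ 1 / Real.sqrt (2 * (1 - Real.cos (2 * Real.pi / 9))) :=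
  one_div_sqrt_le_cosh_half cos_two_pi_div_nine_lt_one <|
    (div_one_sub_le_one_add_one_div_sub_one half_lt_cos_two_pi_div_nine
      cos_two_pi_div_nine_lt_one hx1 hx2).trans hd
end

section
/- Let R_a, R_b, S_a, S_b be nonnegative real numbers with cosh S_a = 3 − cosh R_a and cosh S_b = 3 − cosh R_b. (i) If R_a < R_b and cosh R_b ≤ 3/2, then R_a + S_a < R_b + S_b. (ii) If 3/2 ≤ cosh R_a, R_a < R_b, and cosh R_b ≤ 2, then R_a + S_a > R_b + S_b. (This is the monotonicity claim in the proof of Lemma 3.3: with R′ = arcosh(3 − cosh R), the function R + R′ increases for 1 < cosh R < 3/2, reaches its maximum at cosh R = 3/2, and decreases for cosh R > 3/2.) -/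
/-!
By the sum-to-product formula, `cosh R + cosh S = 3` reads
`2 cosh ((R + S) / 2) cosh ((R - S) / 2) = 3`, so along the curve `R + S` grows exactly when
`|R - S|` shrinks. For `cosh R ≤ 3/2` we have `R ≤ S`, and increasing `R` decreases `S`, so
`S - R` shrinks; for `cosh R ≥ 3/2` we have `S ≤ R` and `R - S` grows.
-/

open Real

namespace Real

theorem cosh_add_cosh (x y : ℝ) :
    cosh x + cosh y = 2 * cosh ((x + y) / 2) * cosh ((x - y) / 2) := by
  have hadd := cosh_add ((x + y) / 2) ((x - y) / 2)
  have hsub := cosh_sub ((x + y) / 2) ((x - y) / 2)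
  rw [show (x + y) / 2 + (x - y) / 2 = x by ring] at hadd
  rw [show (x + y) / 2 - (x - y) / 2 = y by ring] at hsub
  linarith

end Real

lemma add_lt_add_of_cosh_add_cosh_eq {a b c d : ℝ} (ha : 0 ≤ a) (hb : 0 ≤ b) (hc : 0 ≤ c)
    (hd : 0 ≤ d) (h : cosh a + cosh b = cosh c + cosh d) (hdiff : |a - b| < |c - d|) :
    c + d < a + b := by
  rw [cosh_add_cosh, cosh_add_cosh] at h
  have hcosh_diff : cosh ((a - b) / 2) < cosh ((c - d) / 2) := by
    rw [cosh_lt_cosh, abs_div, abs_div]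
    gcongr
  have hcosh_sum : cosh ((c + d) / 2) < cosh ((a + b) / 2) := by
    nlinarith [cosh_pos ((a + b) / 2), cosh_pos ((c + d) / 2), cosh_pos ((a - b) / 2)]
  have := (cosh_strictMonoOn.lt_iff_lt (by simp; positivity) (by simp; positivity)).1 hcosh_sum
  linarith

/-- Monotonicity claim in the proof of Lemma 3.3: with S = arcosh(3 − cosh R),
the function R + S increases for cosh R < 3/2 and decreases for cosh R > 3/2. -/
theorem stmt_5 (Ra Rb Sa Sb : ℝ) (hRa : 0 ≤ Ra) (hRb : 0 ≤ Rb)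
    (hSa : 0 ≤ Sa) (hSb : 0 ≤ Sb)
    (ha : Real.cosh Sa = 3 - Real.cosh Ra)
    (hb : Real.cosh Sb = 3 - Real.cosh Rb) :
    (Ra < Rb → Real.cosh Rb ≤ 3 / 2 → Ra + Sa < Rb + Sb) ∧
      (3 / 2 ≤ Real.cosh Ra → Ra < Rb → Real.cosh Rb ≤ 2 → Ra + Sa > Rb + Sb) := by
  have hcosh_lt {x y : ℝ} (hx : 0 ≤ x) (hy : 0 ≤ y) : cosh x < cosh y ↔ x < y :=
    cosh_strictMonoOn.lt_iff_lt hx hy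
  have hcosh_eq : cosh Ra + cosh Sa = cosh Rb + cosh Sb := by linarith
  refine ⟨fun hR hRb_le => ?_, fun hRa_ge hR _ => ?_⟩
  all_goals
    have hcR : cosh Ra < cosh Rb := (hcosh_lt hRa hRb).2 hR
    have hS : Sb < Sa := (hcosh_lt hSb hSa).1 (by linarith)
  · have hRS : Rb ≤ Sb := cosh_strictMonoOn.le_iff_le hRb hSb |>.1 (by linarith)
    refine add_lt_add_of_cosh_add_cosh_eq hRb hSb hRa hSa hcosh_eq.symm ?_
    rw [abs_sub_comm, abs_of_nonneg (by linarith), abs_sub_comm, abs_of_nonneg (by linarith)]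
    linarith
  · have hSR : Sa ≤ Ra := cosh_strictMonoOn.le_iff_le hSa hRa |>.1 (by linarith)
    refine add_lt_add_of_cosh_add_cosh_eq hRa hSa hRb hSb hcosh_eq ?_
    rw [abs_of_nonneg (by linarith), abs_of_nonneg (by linarith)]
    linarith
end

section
/- Let ℓ_a, ℓ_b be positive reals with ℓ_a < ℓ_b, (3+√3)/4 ≤ cosh ℓ_a, and cosh ℓ_b ≤ 1.4. For i ∈ {a,b}, let R_i ≥ 0, S_i ≥ 0, E_i ≥ 0 be defined by cosh R_i = √(1 + 1/(2·cosh ℓ_i − 2)), cosh S_i = 3 − cosh R_i, and cosh E_i = 2/(cosh²(R_i + S_i)·tanh²ℓ_i − 1) + 1. Then E_b ≤ E_a. (This is Lemma 3.3 of the paper: the quantity E of equation (6) is decreasing in ℓ₁ on the interval (3+√3)/4 ≤ cosh ℓ₁ ≤ 1.4.) -/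
/-!
Write `x = cosh R`, so that `x² = 1 + 1 / (2 cosh ℓ - 2)` decreases with `ℓ`, and `x ≥ 3/2` as long as
`cosh ℓ ≤ 1.4`. With `cosh S = 3 - x` and `P = x (3 - x) = cosh R cosh S` one has
`(sinh R sinh S)² = (P + 1)² - 9`, hence `cosh (R + S) = P + √((P + 1)² - 9)`; this increases with `P`,
and `P` decreases with `x` on `x ≥ 3/2`. So `cosh (R + S)` increases with `ℓ`, as does
`tanh² ℓ = 1 - 1 / cosh² ℓ`, hence so does `D = cosh² (R + S) tanh² ℓ - 1`, and `cosh E = 2 / D + 1`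
decreases, provided `D > 0` at `ℓ_a`. The latter holds because `cosh (R + S) ≥ cosh R + cosh S - 1 = 2`
and `cosh² ℓ_a > 4/3`, i.e. `tanh² ℓ_a > 1/4`.
-/

open Real Set

lemma tanh_sq_eq_one_sub_one_div_cosh_sq (x : ℝ) : tanh x ^ 2 = 1 - 1 / cosh x ^ 2 := by
  rw [tanh_eq_sinh_div_cosh, div_pow, sinh_sq]
  field_simp

lemma cosh_add_cosh_sub_one_le_cosh_add {x y : ℝ} (hx : 0 ≤ x) (hy : 0 ≤ y) :
    cosh x + cosh y - 1 ≤ cosh (x + y) := by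
  have hsinh : 0 ≤ sinh x * sinh y := mul_nonneg (sinh_nonneg_iff.2 hx) (sinh_nonneg_iff.2 hy)
  rw [cosh_add]
  nlinarith [one_le_cosh x, one_le_cosh y]

lemma cosh_add_eq_of_cosh_eq_three_sub {R S : ℝ} (hR : 0 ≤ R) (hS : 0 ≤ S)
    (h : cosh S = 3 - cosh R) :
    cosh (R + S) = cosh R * (3 - cosh R) + √((cosh R * (3 - cosh R) + 1) ^ 2 - 9) := by
  have hsq : (cosh R * (3 - cosh R) + 1) ^ 2 - 9 = (sinh R * sinh S) ^ 2 := by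
    rw [mul_pow, sinh_sq, sinh_sq, h]
    ring
  rw [hsq, sqrt_sq (mul_nonneg (sinh_nonneg_iff.2 hR) (sinh_nonneg_iff.2 hS)), cosh_add, h]

lemma monotoneOn_add_sqrt_add_one_sq_sub_nine :
    MonotoneOn (fun P : ℝ => P + √((P + 1) ^ 2 - 9)) (Ici (-1)) := by
  intro a ha b _ hab
  simp only [mem_Ici] at ha
  have : (a + 1) ^ 2 ≤ (b + 1) ^ 2 := pow_le_pow_left₀ (by linarith) (by linarith) 2
  dsimp only
  gcongr

lemma antitoneOn_mul_three_sub : AntitoneOn (fun x : ℝ => x * (3 - x)) (Ici (3 / 2)) := by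
  intro a ha b _ hab
  simp only [mem_Ici] at ha
  nlinarith

lemma cosh_add_le_cosh_add_of_cosh_eq_three_sub {Ra Sa Rb Sb : ℝ}
    (hRa : 0 ≤ Ra) (hSa : 0 ≤ Sa) (ha : cosh Sa = 3 - cosh Ra)
    (hRb : 0 ≤ Rb) (hSb : 0 ≤ Sb) (hb : cosh Sb = 3 - cosh Rb)
    (hRb_ge : 3 / 2 ≤ cosh Rb) (hR : cosh Rb ≤ cosh Ra) :
    cosh (Ra + Sa) ≤ cosh (Rb + Sb) := by
  have hP_ge (R S : ℝ) (h : cosh S = 3 - cosh R) : -1 ≤ cosh R * (3 - cosh R) := by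
    nlinarith [one_le_cosh R, one_le_cosh S]
  rw [cosh_add_eq_of_cosh_eq_three_sub hRa hSa ha, cosh_add_eq_of_cosh_eq_three_sub hRb hSb hb]
  exact monotoneOn_add_sqrt_add_one_sq_sub_nine (hP_ge Ra Sa ha) (hP_ge Rb Sb hb)
    (antitoneOn_mul_three_sub (mem_Ici.2 hRb_ge) (mem_Ici.2 (hRb_ge.trans hR)) hR)

lemma antitoneOn_sqrt_one_add_one_div_two_mul_sub_two :
    AntitoneOn (fun c : ℝ => √(1 + 1 / (2 * c - 2))) (Ioi 1) := by
  intro a ha b _ hab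
  simp only [mem_Ioi] at ha
  have : 0 < 2 * a - 2 := by linarith
  dsimp only
  gcongr

lemma three_halves_le_sqrt_one_add_one_div_two_mul_sub_two {c : ℝ} (h1 : 1 < c)
    (h : c ≤ 1.4) : 3 / 2 ≤ √(1 + 1 / (2 * c - 2)) := by
  have : 5 / 4 ≤ 1 / (2 * c - 2) := by
    rw [le_div_iff₀ (by linarith)]
    linarith
  rw [le_sqrt (by norm_num) (by positivity)]
  linarith

lemma le_of_cosh_eq_two_div_add_one {D D' E E' : ℝ} (hD : 0 < D) (hDD' : D ≤ D')
    (hE : 0 ≤ E) (hE' : 0 ≤ E') (h : cosh E = 2 / D + 1) (h' : cosh E' = 2 / D' + 1) :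
    E' ≤ E := by
  have hcosh : cosh E' ≤ cosh E := by
    rw [h, h']
    gcongr
  rwa [cosh_le_cosh, abs_of_nonneg hE, abs_of_nonneg hE'] at hcosh

theorem stmt_6_general (ℓa ℓb Ra Rb Sa Sb Ea Eb : ℝ)
    (hℓa : 0 < ℓa) (hab : ℓa < ℓb)
    (h1 : (3 + Real.sqrt 3) / 4 ≤ Real.cosh ℓa) (h2 : Real.cosh ℓb ≤ 1.4)
    (hRa0 : 0 ≤ Ra)
    (hRa : Real.cosh Ra = Real.sqrt (1 + 1 / (2 * Real.cosh ℓa - 2)))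
    (hSa0 : 0 ≤ Sa) (hSa : Real.cosh Sa = 3 - Real.cosh Ra)
    (hEa0 : 0 ≤ Ea)
    (hEa : Real.cosh Ea
      = 2 / (Real.cosh (Ra + Sa) ^ 2 * Real.tanh ℓa ^ 2 - 1) + 1)
    (hRb0 : 0 ≤ Rb)
    (hRb : Real.cosh Rb = Real.sqrt (1 + 1 / (2 * Real.cosh ℓb - 2)))
    (hSb0 : 0 ≤ Sb) (hSb : Real.cosh Sb = 3 - Real.cosh Rb)
    (hEb0 : 0 ≤ Eb)
    (hEb : Real.cosh Eb
      = 2 / (Real.cosh (Rb + Sb) ^ 2 * Real.tanh ℓb ^ 2 - 1) + 1) :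
    Eb ≤ Ea := by
  have hsqrt3 : (1.7 : ℝ) < √3 := (lt_sqrt (by norm_num)).2 (by norm_num)
  have hca : 1 < cosh ℓa := by linarith
  have hcab : cosh ℓa ≤ cosh ℓb := by
    rw [cosh_le_cosh, abs_of_pos hℓa, abs_of_pos (hℓa.trans hab)]
    exact hab.le
  have hcb : 1 < cosh ℓb := hca.trans_le hcab
  have hR : cosh Rb ≤ cosh Ra :=
    hRa ▸ hRb ▸ antitoneOn_sqrt_one_add_one_div_two_mul_sub_two hca hcb hcab
  have hRb_ge : 3 / 2 ≤ cosh Rb := hRb ▸ three_halves_le_sqrt_one_add_one_div_two_mul_sub_two hcb h2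
  have hK : 2 ≤ cosh (Ra + Sa) := by
    linarith [cosh_add_cosh_sub_one_le_cosh_add hRa0 hSa0]
  have htanh : 1 / 4 < tanh ℓa ^ 2 := by
    have hc : 1 / cosh ℓa ^ 2 < 3 / 4 := (div_lt_iff₀ (by positivity)).2 (by nlinarith)
    rw [tanh_sq_eq_one_sub_one_div_cosh_sq]
    linarith
  have hDa : 0 < cosh (Ra + Sa) ^ 2 * tanh ℓa ^ 2 - 1 := by
    have hK2 : 4 ≤ cosh (Ra + Sa) ^ 2 := by nlinarith
    nlinarith [mul_le_mul_of_nonneg_right hK2 (sq_nonneg (tanh ℓa))]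
  refine le_of_cosh_eq_two_div_add_one hDa ?_ hEa0 hEb0 hEa hEb
  gcongr ?_ ^ 2 * ?_ - 1
  · exact cosh_add_le_cosh_add_of_cosh_eq_three_sub hRa0 hSa0 hSa hRb0 hSb0 hSb hRb_ge hR
  · rw [tanh_sq_eq_one_sub_one_div_cosh_sq, tanh_sq_eq_one_sub_one_div_cosh_sq]
    gcongr

/-- Lemma 3.3 of the paper: the quantity E of equation (6) is decreasing in ℓ₁
on the interval (3+√3)/4 ≤ cosh ℓ₁ ≤ 1.4. -/
theorem stmt_6 (ℓa ℓb Ra Rb Sa Sb Ea Eb : ℝ)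
    (hℓa : 0 < ℓa) (hℓb : 0 < ℓb) (hab : ℓa < ℓb)
    (h1 : (3 + Real.sqrt 3) / 4 ≤ Real.cosh ℓa) (h2 : Real.cosh ℓb ≤ 1.4)
    (hRa0 : 0 ≤ Ra)
    (hRa : Real.cosh Ra = Real.sqrt (1 + 1 / (2 * Real.cosh ℓa - 2)))
    (hSa0 : 0 ≤ Sa) (hSa : Real.cosh Sa = 3 - Real.cosh Ra)
    (hEa0 : 0 ≤ Ea)
    (hEa : Real.cosh Ea
      = 2 / (Real.cosh (Ra + Sa) ^ 2 * Real.tanh ℓa ^ 2 - 1) + 1)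
    (hRb0 : 0 ≤ Rb)
    (hRb : Real.cosh Rb = Real.sqrt (1 + 1 / (2 * Real.cosh ℓb - 2)))
    (hSb0 : 0 ≤ Sb) (hSb : Real.cosh Sb = 3 - Real.cosh Rb)
    (hEb0 : 0 ≤ Eb)
    (hEb : Real.cosh Eb
      = 2 / (Real.cosh (Rb + Sb) ^ 2 * Real.tanh ℓb ^ 2 - 1) + 1) :
    Eb ≤ Ea :=
  stmt_6_general ℓa ℓb Ra Rb Sa Sb Ea Eb hℓa hab h1 h2 hRa0 hRa hSa0 hSa hEa0 hEa hRb0 hRb hSb0 hSb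
    hEb0 hEb
end

section
/- Let ℓ > 0 be a real number with (3+√3)/4 ≤ cosh ℓ ≤ 1.215. Let R, S, E, F, A be nonnegative reals defined by cosh R = √(1 + 1/(2·cosh ℓ − 2)), cosh S = 3 − cosh R, cosh E = 2/(cosh²(R + S)·tanh²ℓ − 1) + 1, cosh F = √((cosh ℓ + 1)/(cosh(2S) − 1) + 1), and cosh A = √((2/3)(cosh ℓ + 1)). Then min(E, F) > 2ℓ and min(E, F) > 2A. (This is the real-analytic content of Lemma 3.5 of the paper: if cosh ℓ₁ ≤ 1.215, then ℓ₁ and A are each less than ℓ₂/2, since ℓ₂ ≥ min{E, F}.) -/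
/-!
Write `x = cosh ℓ` and `r = cosh R`. The definition of `R` says `x = (2r² - 1)/(2r² - 2)`, and
the range of `x` confines `r` to `[1.8235, 1.95]`; moreover `sinh² S = (3 - r)² - 1` and
`cosh (R + S) = r (3 - r) + sinh R sinh S`. Since `cosh 2A = (4x + 1)/3` exceeds
`cosh 2ℓ = 2x² - 1` as long as `x < (1 + √7)/3 ≈ 1.2153`, we get `ℓ < A` and it suffices to
show `2A < E` and `2A < F`. After clearing denominators these become
`cosh (R + S) · r < 2r² - 1` (plus positivity of the denominator in `cosh E`) and
`16 r² sinh² S < 9 sinh² R`, polynomial inequalities on the interval for `r`; both are nearly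
sharp at its lower end `1.8235`.
-/

open Real

lemma Real.lt_of_cosh_lt_cosh {a b : ℝ} (hb : 0 ≤ b) (h : cosh a < cosh b) : a < b :=
  (le_abs_self a).trans_lt (by rwa [cosh_lt_cosh, abs_of_nonneg hb] at h)

lemma Real.cosh_two_mul_eq_two_mul_cosh_sq_sub_one (a : ℝ) :
    cosh (2 * a) = 2 * cosh a ^ 2 - 1 := by
  rw [cosh_two_mul, sinh_sq]; ring

lemma Real.tanh_sq_eq_cosh_sq_sub_one_div (a : ℝ) :
    tanh a ^ 2 = (cosh a ^ 2 - 1) / cosh a ^ 2 := by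
  rw [tanh_eq_sinh_div_cosh, div_pow, sinh_sq]

lemma eq_and_bounds_of_eq_sqrt_one_add_one_div {x r : ℝ} (hx₀ : 1.18 ≤ x) (hx₁ : x ≤ 1.215)
    (hr : r = √(1 + 1 / (2 * x - 2))) :
    x * (2 * r ^ 2 - 2) = 2 * r ^ 2 - 1 ∧ 1.8235 ≤ r ∧ r ≤ 1.95 := by
  have hx : 0 < 2 * x - 2 := by linarith
  have hr0 : 0 ≤ r := hr ▸ sqrt_nonneg _
  have hxr : x * (2 * r ^ 2 - 2) = 2 * r ^ 2 - 1 := by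
    rw [hr, sq_sqrt (by positivity)]
    linear_combination mul_one_div_cancel hx.ne'
  have hr2₀ : 3.3252 ≤ r ^ 2 := by nlinarith
  have hr2₁ : r ^ 2 ≤ 3.7778 := by nlinarith
  exact ⟨hxr, by nlinarith, by nlinarith⟩

section
variable {R S : ℝ}

lemma cosh_add_mul_cosh_lt (hR : 0 ≤ R) (hS : 0 ≤ S) (hRS : cosh S = 3 - cosh R)
    (hr : 1.8235 ≤ cosh R) : cosh (R + S) * cosh R < 2 * cosh R ^ 2 - 1 := by
  set r := cosh R
  have hs0 : 0 ≤ sinh R * sinh S := mul_nonneg (sinh_nonneg_iff.2 hR) (sinh_nonneg_iff.2 hS)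
  have hs : (sinh R * sinh S) ^ 2 = (r ^ 2 - 1) * ((3 - r) ^ 2 - 1) := by
    rw [mul_pow, sinh_sq, sinh_sq, hRS]
  have hsr : sinh R * sinh S * r < r ^ 3 - r ^ 2 - 1 := by
    refine lt_of_pow_lt_pow_left₀ 2 (by nlinarith) ?_
    rw [mul_pow, hs]
    nlinarith [sq_nonneg (r - 1.8235), mul_nonneg (sq_nonneg (r - 1.8235)) (sub_nonneg.2 hr)]
  rw [cosh_add, hRS]
  linarith

lemma sq_lt_cosh_add_sq_mul (hR : 0 ≤ R) (hS : 0 ≤ S) (hRS : cosh S = 3 - cosh R)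
    (hr₀ : 1.8235 ≤ cosh R) (hr₁ : cosh R ≤ 1.95) :
    (2 * cosh R ^ 2 - 1) ^ 2 < cosh (R + S) ^ 2 * (4 * cosh R ^ 2 - 3) := by
  set r := cosh R
  have hc : r * (3 - r) ≤ cosh (R + S) := by
    rw [cosh_add, hRS]
    nlinarith [mul_nonneg (sinh_nonneg_iff.2 hR) (sinh_nonneg_iff.2 hS)]
  have hc2 : (r * (3 - r)) ^ 2 ≤ cosh (R + S) ^ 2 := pow_le_pow_left₀ (by nlinarith) hc 2
  nlinarith [mul_nonneg (sub_nonneg.2 hr₀) (sub_nonneg.2 hr₁), sq_nonneg (r - 1.8235)]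

lemma cosh_sq_mul_sinh_sq_lt (hRS : cosh S = 3 - cosh R) (hr₀ : 1.8235 ≤ cosh R)
    (hr₁ : cosh R ≤ 1.95) : 16 * cosh R ^ 2 * sinh S ^ 2 < 9 * (cosh R ^ 2 - 1) := by
  rw [sinh_sq, hRS]
  nlinarith [mul_nonneg (sub_nonneg.2 hr₀) (sub_nonneg.2 hr₁), sq_nonneg (cosh R - 1.8235)]

end

section
variable {x r : ℝ}

lemma lt_two_div_sub_one_add_one {c : ℝ} (hxr : x * (2 * r ^ 2 - 2) = 2 * r ^ 2 - 1)
    (hD : (2 * r ^ 2 - 1) ^ 2 < c ^ 2 * (4 * r ^ 2 - 3))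
    (hcr : (c * r) ^ 2 < (2 * r ^ 2 - 1) ^ 2) :
    (4 * x + 1) / 3 < 2 / (c ^ 2 * ((x ^ 2 - 1) / x ^ 2) - 1) + 1 := by
  have hu : 0 < r ^ 2 - 1 := by nlinarith
  have hx : x = (2 * r ^ 2 - 1) / (2 * (r ^ 2 - 1)) := by
    rw [eq_div_iff (by positivity)]; linarith
  have hv : 0 < 2 * r ^ 2 - 1 := by linarith
  have ht : (x ^ 2 - 1) / x ^ 2 = (4 * r ^ 2 - 3) / (2 * r ^ 2 - 1) ^ 2 := by
    rw [hx]; field_simp; ring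
  have hDpos : 0 < c ^ 2 * ((4 * r ^ 2 - 3) / (2 * r ^ 2 - 1) ^ 2) - 1 := by
    rw [sub_pos, ← mul_div_assoc, one_lt_div (by positivity)]; exact hD
  rw [ht, ← sub_lt_iff_lt_add, lt_div_iff₀ hDpos, hx]
  field_simp
  nlinarith

lemma lt_sqrt_div_add_one {q : ℝ} (hxr : x * (2 * r ^ 2 - 2) = 2 * r ^ 2 - 1)
    (hq : 0 < q) (h : 16 * r ^ 2 * q < 9 * (r ^ 2 - 1)) :
    (4 * x + 1) / 3 < √((x + 1) / (2 * q) + 1) := by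
  have hu : 0 < r ^ 2 - 1 := by nlinarith
  have hx : x = (2 * r ^ 2 - 1) / (2 * (r ^ 2 - 1)) := by
    rw [eq_div_iff (by positivity)]; linarith
  have hx0 : 0 < x := by rw [hx]; exact div_pos (by linarith) (by positivity)
  rw [lt_sqrt (by positivity), ← sub_lt_iff_lt_add, lt_div_iff₀ (by positivity), hx]
  field_simp
  nlinarith

end

theorem stmt_7_general (ℓ R S E F A : ℝ)
    (h1 : (3 + Real.sqrt 3) / 4 ≤ Real.cosh ℓ) (h2 : Real.cosh ℓ ≤ 1.215)
    (hR0 : 0 ≤ R)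
    (hR : Real.cosh R = Real.sqrt (1 + 1 / (2 * Real.cosh ℓ - 2)))
    (hS0 : 0 ≤ S) (hS : Real.cosh S = 3 - Real.cosh R)
    (hE0 : 0 ≤ E)
    (hE : Real.cosh E = 2 / (Real.cosh (R + S) ^ 2 * Real.tanh ℓ ^ 2 - 1) + 1)
    (hF0 : 0 ≤ F)
    (hF : Real.cosh F
      = Real.sqrt ((Real.cosh ℓ + 1) / (Real.cosh (2 * S) - 1) + 1))
    (hA0 : 0 ≤ A)
    (hA : Real.cosh A = Real.sqrt ((2 / 3) * (Real.cosh ℓ + 1))) :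
    min E F > 2 * ℓ ∧ min E F > 2 * A := by
  have hsqrt3 : (1.72 : ℝ) ≤ √3 := (le_sqrt (by norm_num) (by norm_num)).2 (by norm_num)
  obtain ⟨hxr, hr₀, hr₁⟩ := eq_and_bounds_of_eq_sqrt_one_add_one_div (by linarith) h2 hR
  have h2A : cosh (2 * A) = (4 * cosh ℓ + 1) / 3 := by
    rw [cosh_two_mul_eq_two_mul_cosh_sq_sub_one, hA, sq_sqrt (by positivity)]; ring
  have hℓA : 2 * ℓ < 2 * A := lt_of_cosh_lt_cosh (by positivity) <| by
    rw [h2A, cosh_two_mul_eq_two_mul_cosh_sq_sub_one]; nlinarith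
  have hEA : 2 * A < E := lt_of_cosh_lt_cosh hE0 <| by
    rw [h2A, hE, tanh_sq_eq_cosh_sq_sub_one_div]
    exact lt_two_div_sub_one_add_one hxr (sq_lt_cosh_add_sq_mul hR0 hS0 hS hr₀ hr₁)
      (pow_lt_pow_left₀ (cosh_add_mul_cosh_lt hR0 hS0 hS hr₀) (by positivity) two_ne_zero)
  have hFA : 2 * A < F := lt_of_cosh_lt_cosh hF0 <| by
    have hS2 : cosh (2 * S) - 1 = 2 * sinh S ^ 2 := by rw [cosh_two_mul, cosh_sq]; ring
    rw [h2A, hF, hS2]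
    refine lt_sqrt_div_add_one hxr ?_ (cosh_sq_mul_sinh_sq_lt hS hr₀ hr₁)
    rw [sinh_sq, hS]; nlinarith
  exact ⟨lt_min (by linarith) (by linarith), lt_min hEA hFA⟩

/-- Real-analytic content of Lemma 3.5 of the paper: if cosh ℓ₁ ≤ 1.215, then
ℓ₁ and A are each less than ℓ₂/2, since ℓ₂ ≥ min{E, F}. -/
theorem stmt_7 (ℓ R S E F A : ℝ) (hℓ : 0 < ℓ)
    (h1 : (3 + Real.sqrt 3) / 4 ≤ Real.cosh ℓ) (h2 : Real.cosh ℓ ≤ 1.215)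
    (hR0 : 0 ≤ R)
    (hR : Real.cosh R = Real.sqrt (1 + 1 / (2 * Real.cosh ℓ - 2)))
    (hS0 : 0 ≤ S) (hS : Real.cosh S = 3 - Real.cosh R)
    (hE0 : 0 ≤ E)
    (hE : Real.cosh E = 2 / (Real.cosh (R + S) ^ 2 * Real.tanh ℓ ^ 2 - 1) + 1)
    (hF0 : 0 ≤ F)
    (hF : Real.cosh F
      = Real.sqrt ((Real.cosh ℓ + 1) / (Real.cosh (2 * S) - 1) + 1))
    (hA0 : 0 ≤ A)
    (hA : Real.cosh A = Real.sqrt ((2 / 3) * (Real.cosh ℓ + 1))) :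
    min E F > 2 * ℓ ∧ min E F > 2 * A :=
  stmt_7_general ℓ R S E F A h1 h2 hR0 hR hS0 hS hE0 hE hF0 hF hA0 hA
end

section
/- Let ℓ > 0 be a real number. Then (cosh²ℓ + cosh(2ℓ)) / sinh²ℓ = 3 + 2/sinh²ℓ; moreover, if (cosh²ℓ + cosh(2ℓ)) / sinh²ℓ ≤ 3 + 2√3, then sinh²ℓ ≥ 1/√3 and cosh ℓ > 1.255. (This is the computational core of Proposition 3.7: if a manifold has no (1,1,1) hexagon, then cosh d₁₁ ≥ (cosh²ℓ₁ + cosh 2ℓ₁)/sinh²ℓ₁ = 3 + 2/sinh²ℓ₁, and combined with cosh d₁₁ ≤ 3 + 2√3 this forces cosh ℓ₁ > 1.255.) -/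
open Real

theorem Real.cosh_sq_add_cosh_two_mul (x : ℝ) : cosh x ^ 2 + cosh (2 * x) = 3 * sinh x ^ 2 + 2 := by
  rw [cosh_two_mul, cosh_sq]
  ring

theorem Real.cosh_sq_add_cosh_two_mul_div_sinh_sq {x : ℝ} (hx : x ≠ 0) :
    (cosh x ^ 2 + cosh (2 * x)) / sinh x ^ 2 = 3 + 2 / sinh x ^ 2 := by
  have hs : sinh x ^ 2 ≠ 0 := pow_ne_zero 2 (sinh_ne_zero.mpr hx)
  rw [cosh_sq_add_cosh_two_mul]
  field_simp

theorem Real.one_div_sqrt_three_le_of_three_add_two_div_le {s : ℝ} (hs : 0 < s)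
    (h : 3 + 2 / s ≤ 3 + 2 * √3) : 1 / √3 ≤ s := by
  have h' : 1 / s ≤ √3 := by linarith [show 2 / s = 2 * (1 / s) by ring]
  exact (one_div_le hs (by positivity)).mp h'

theorem Real.sq_lt_one_add_one_div_sqrt_three : (1.255 : ℝ) ^ 2 < 1 + 1 / √3 := by
  have hsqrt : √3 < 1.7321 := by
    rw [sqrt_lt' (by norm_num)]
    norm_num
  have : (0.5771 : ℝ) < 1 / √3 := by
    rw [lt_div_iff₀ (by positivity)]
    nlinarith
  norm_num at this ⊢
  linarith

theorem Real.lt_cosh_of_one_div_sqrt_three_le_sinh_sq {x : ℝ} (h : 1 / √3 ≤ sinh x ^ 2) :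
    1.255 < cosh x := by
  have hsq : (1.255 : ℝ) ^ 2 < cosh x ^ 2 := by
    rw [cosh_sq']
    linarith [sq_lt_one_add_one_div_sqrt_three]
  exact (pow_lt_pow_iff_left₀ (by norm_num) (cosh_pos x).le two_ne_zero).mp hsq

/-- Computational core of Proposition 3.7: (cosh²ℓ + cosh 2ℓ)/sinh²ℓ = 3 + 2/sinh²ℓ,
and if this quantity is at most 3 + 2√3 then sinh²ℓ ≥ 1/√3 and cosh ℓ > 1.255. -/
theorem stmt_8 (ℓ : ℝ) (hℓ : 0 < ℓ) :
    (Real.cosh ℓ ^ 2 + Real.cosh (2 * ℓ)) / Real.sinh ℓ ^ 2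
        = 3 + 2 / Real.sinh ℓ ^ 2 ∧
      ((Real.cosh ℓ ^ 2 + Real.cosh (2 * ℓ)) / Real.sinh ℓ ^ 2
          ≤ 3 + 2 * Real.sqrt 3 →
        Real.sinh ℓ ^ 2 ≥ 1 / Real.sqrt 3 ∧ Real.cosh ℓ > 1.255) := by
  have heq := cosh_sq_add_cosh_two_mul_div_sinh_sq hℓ.ne'
  refine ⟨heq, fun h => ?_⟩
  have hsinh_sq : 0 < sinh ℓ ^ 2 := pow_pos (sinh_pos_iff.mpr hℓ) 2
  have hge := one_div_sqrt_three_le_of_three_add_two_div_le hsinh_sq (heq ▸ h)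
  exact ⟨hge, lt_cosh_of_one_div_sqrt_three_le_sinh_sq hge⟩
end

section
/- Define V : ℝ → ℝ by V(ℓ) = π·[ℓ + 2·sinh ℓ + √((2·cosh ℓ − 1)/(2·cosh ℓ − 2))·(log(w + √(w² − 1)) − ℓ − sinh ℓ)], where w = (4·cosh ℓ + 1)/3 (so that log(w + √(w²−1)) = arcosh((4 cosh ℓ + 1)/3)). Then V is strictly increasing on the set {ℓ > 0 : cosh ℓ ≥ 1.439}. (This is the monotonicity claim established in the proof of Proposition 3.1: the volume of the union of the muffin and a collar of height ℓ₁/2 is increasing in ℓ₁ for cosh ℓ₁ ≥ 1.439.) -/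
/-- The volume of the union of the muffin and a collar of height ℓ₁/2, as a
function of ℓ₁ (proof of Proposition 3.1). -/
noncomputable def muffinCollarVol (ℓ : ℝ) : ℝ :=
  Real.pi * (ℓ + 2 * Real.sinh ℓ
    + Real.sqrt ((2 * Real.cosh ℓ - 1) / (2 * Real.cosh ℓ - 2))
      * (Real.log ((4 * Real.cosh ℓ + 1) / 3
          + Real.sqrt (((4 * Real.cosh ℓ + 1) / 3) ^ 2 - 1)) - ℓ - Real.sinh ℓ))

/-
Write `V ℓ = π (ℓ + 2 sinh ℓ + f ℓ (arcosh w - ℓ - sinh ℓ))` with `f = √((2c - 1) / (2c - 2))`,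
`w = (4c + 1) / 3` and `c = cosh ℓ`. Since `w² - 1 = 8 (2c - 1)(c + 1) / 9 = (f · 4 sinh ℓ / 3)²`,
the coefficient `f` times the derivative of `arcosh w` is exactly `1`, and the derivative collapses to
`V' / π = (2 - f)(1 + c) + f' (arcosh w - ℓ - sinh ℓ)`. Once `sinh ℓ ≥ 1` (implied by
`cosh ℓ ≥ 1.439`) we have `f < 2`, `f' < 0` and `arcosh w ≤ log (2w) ≤ ℓ + sinh ℓ`, so `V' > 0`.
-/

open Real Set

noncomputable def muffinCoeff (ℓ : ℝ) : ℝ :=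
  √((2 * cosh ℓ - 1) / (2 * cosh ℓ - 2))

theorem muffinCollarVol_eq (ℓ : ℝ) :
    muffinCollarVol ℓ = π * (ℓ + 2 * sinh ℓ
      + muffinCoeff ℓ * (arcosh ((4 * cosh ℓ + 1) / 3) - ℓ - sinh ℓ)) :=
  rfl

section

variable {x : ℝ}

theorem muffinCoeff_pos (hx : x ≠ 0) : 0 < muffinCoeff x := by
  have := one_lt_cosh.mpr hx
  exact sqrt_pos.mpr (div_pos (by linarith) (by linarith))

theorem muffinCoeff_lt_two (hx : 7 / 6 < cosh x) : muffinCoeff x < 2 := by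
  rw [muffinCoeff, sqrt_lt' two_pos, div_lt_iff₀ (by linarith)]
  linarith

theorem hasDerivAt_muffinCoeff (hx : x ≠ 0) :
    HasDerivAt muffinCoeff (-(sinh x / ((2 * cosh x - 2) ^ 2 * muffinCoeff x))) x := by
  have hc : 2 * cosh x - 2 ≠ 0 := by linarith [one_lt_cosh.mpr hx]
  have h := ((((hasDerivAt_cosh x).const_mul 2).sub_const 1).div
    (((hasDerivAt_cosh x).const_mul 2).sub_const 2) hc).sqrt (sqrt_pos.mp (muffinCoeff_pos hx)).ne'
  refine h.congr_deriv ?_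
  change _ / (2 * muffinCoeff x) = _
  field_simp
  ring

theorem hasDerivAt_arcosh_muffinArg (hx : x ≠ 0) :
    HasDerivAt (fun ℓ => arcosh ((4 * cosh ℓ + 1) / 3))
      (4 * sinh x / 3 / √(((4 * cosh x + 1) / 3) ^ 2 - 1)) x := by
  have hw : (4 * cosh x + 1) / 3 ∈ Ioi 1 := by
    simp only [mem_Ioi]; linarith [one_lt_cosh.mpr hx]
  have h := (hasDerivAt_arcosh hw).comp x
    (((hasDerivAt_cosh x).const_mul 4).add_const 1 |>.div_const 3)
  exact h.congr_deriv (inv_mul_eq_div _ _)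

theorem muffinCoeff_mul_sinh (hx : 0 < x) :
    muffinCoeff x * (4 * sinh x / 3) = √(((4 * cosh x + 1) / 3) ^ 2 - 1) := by
  have hc := one_lt_cosh.mpr hx.ne'
  have hs := sinh_pos_iff.mpr hx
  rw [muffinCoeff, ← sqrt_sq (by positivity : 0 ≤ 4 * sinh x / 3), ← sqrt_mul' _ (sq_nonneg _),
    div_pow, mul_pow, sinh_sq]
  have : cosh x - 1 ≠ 0 := by linarith
  congr 1
  field_simp
  ring

theorem arcosh_le_log_two_mul {w : ℝ} (hw : 1 ≤ w) : arcosh w ≤ log (2 * w) := by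
  apply log_le_log (by positivity)
  have : √(w ^ 2 - 1) ≤ w := (sqrt_le_left (by linarith)).mpr (by linarith)
  linarith

theorem arcosh_muffinArg_le (hx : 1 ≤ sinh x) :
    arcosh ((4 * cosh x + 1) / 3) ≤ x + sinh x := by
  have hc : 1 ≤ cosh x := one_le_cosh x
  refine (arcosh_le_log_two_mul (by linarith)).trans ?_
  rw [log_le_iff_le_exp (by positivity), exp_add, ← cosh_add_sinh]
  have he : 8 / 3 ≤ exp (sinh x) :=
    calc (8 / 3 : ℝ) ≤ exp 1 := by linarith [exp_one_gt_d9]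
      _ ≤ exp (sinh x) := exp_le_exp.mpr hx
  nlinarith

theorem hasDerivAt_muffinCollarVol (hx : 0 < x) :
    HasDerivAt muffinCollarVol (π * ((2 - muffinCoeff x) * (1 + cosh x)
      - sinh x / ((2 * cosh x - 2) ^ 2 * muffinCoeff x)
        * (arcosh ((4 * cosh x + 1) / 3) - x - sinh x))) x := by
  have hr : √(((4 * cosh x + 1) / 3) ^ 2 - 1) ≠ 0 := by
    rw [← muffinCoeff_mul_sinh hx]
    exact mul_ne_zero (muffinCoeff_pos hx.ne').ne' (by linarith [sinh_pos_iff.mpr hx])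
  have hcancel : muffinCoeff x * (4 * sinh x / 3 / √(((4 * cosh x + 1) / 3) ^ 2 - 1)) = 1 := by
    rw [← mul_div_assoc, muffinCoeff_mul_sinh hx, div_self hr]
  have h := (((hasDerivAt_id x).add ((hasDerivAt_sinh x).const_mul 2)).add
    ((hasDerivAt_muffinCoeff hx.ne').mul (((hasDerivAt_arcosh_muffinArg hx.ne').sub
      (hasDerivAt_id x)).sub (hasDerivAt_sinh x)))).const_mul π
  rw [show muffinCollarVol = _ from funext muffinCollarVol_eq]
  refine h.congr_deriv ?_
  simp only [Pi.sub_apply, id_eq]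
  linear_combination π * hcancel

theorem deriv_muffinCollarVol_pos (hx : 1 ≤ sinh x) : 0 < deriv muffinCollarVol x := by
  have hx0 : 0 < x := sinh_pos_iff.mp (by linarith)
  have hc : 7 / 6 < cosh x := by nlinarith [cosh_sq x, cosh_pos x]
  have hslope : 0 ≤ sinh x / ((2 * cosh x - 2) ^ 2 * muffinCoeff x) :=
    div_nonneg (by linarith) (mul_nonneg (sq_nonneg _) (muffinCoeff_pos hx0.ne').le)
  have hgap := sub_nonneg.mpr (arcosh_muffinArg_le hx)
  rw [(hasDerivAt_muffinCollarVol hx0).deriv]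
  refine mul_pos pi_pos ?_
  nlinarith [mul_nonneg hslope hgap, muffinCoeff_lt_two hc]

end

theorem strictMonoOn_muffinCollarVol : StrictMonoOn muffinCollarVol (Ici (arsinh 1)) := by
  have hsinh {x : ℝ} (hx : x ∈ Ici (arsinh 1)) : 1 ≤ sinh x := by
    rw [← sinh_arsinh 1]; exact sinh_le_sinh.mpr hx
  refine strictMonoOn_of_deriv_pos (convex_Ici _) (fun x hx => ?_) (fun x hx => ?_)
  · have hx0 : 0 < x := sinh_pos_iff.mp (by linarith [hsinh hx])
    exact (hasDerivAt_muffinCollarVol hx0).continuousAt.continuousWithinAt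
  · exact deriv_muffinCollarVol_pos (hsinh (interior_subset hx))

/-- Monotonicity claim in the proof of Proposition 3.1: V is strictly
increasing on {ℓ > 0 : cosh ℓ ≥ 1.439}. -/
theorem stmt_9 :
    StrictMonoOn muffinCollarVol {ℓ : ℝ | 0 < ℓ ∧ Real.cosh ℓ ≥ 1.439} := by
  refine strictMonoOn_muffinCollarVol.mono fun x ⟨hx, hc⟩ => ?_
  have hs : 1 ≤ sinh x := by nlinarith [sinh_sq x, sinh_pos_iff.mpr hx]
  exact sinh_le_sinh.mp (by rwa [sinh_arsinh])
end

section
/- Define V : ℝ → ℝ by V(ℓ) = π·[ℓ + 2·sinh ℓ + √((2·cosh ℓ − 1)/(2·cosh ℓ − 2))·(log(w + √(w² − 1)) − ℓ − sinh ℓ)], where w = (4·cosh ℓ + 1)/3. Then for every real ℓ > 0 with cosh ℓ ≥ 1.439, one has V(ℓ) > 6.89. (This is the quantitative step in the proof of Proposition 3.1: when cosh ℓ₁ = 1.439 the formula yields a value greater than 7.1, and V is increasing for cosh ℓ₁ ≥ 1.439, so the bound V(ℓ) > 6.89 holds on the whole range.) -/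
open Real

lemma two_mul_add_cube_le_log {x : ℝ} (hx : 1 ≤ x) :
    2 * ((x - 1) / (x + 1)) + 2 / 3 * ((x - 1) / (x + 1)) ^ 3 ≤ log x := by
  have h := sum_le_hasSum (Finset.range 2) (fun k _ => by positivity)
    (hasSum_log_one_add (sub_nonneg.2 hx))
  norm_num [Finset.sum_range_succ, show x - 1 + 2 = x + 1 by ring] at h
  exact h

lemma add_inv_le_add_inv {x y : ℝ} (hx : 1 ≤ x) (hxy : x ≤ y) : x + x⁻¹ ≤ y + y⁻¹ := by
  have hy : 0 < y := by linarith
  have hxy_inv : y⁻¹ * x⁻¹ ≤ 1 := by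
    rw [← mul_inv]; exact inv_le_one_of_one_le₀ (by nlinarith)
  have key : y + y⁻¹ - (x + x⁻¹) = (y - x) * (1 - y⁻¹ * x⁻¹) := by field_simp; ring
  nlinarith [mul_nonneg (sub_nonneg.2 hxy) (sub_nonneg.2 hxy_inv)]

lemma le_arcosh_of_cosh_le {x y : ℝ} (hy : 0 ≤ y) (h : cosh y ≤ x) : y ≤ arcosh x := by
  rw [← arcosh_cosh hy]
  exact (arcosh_le_arcosh (cosh_pos y) ((cosh_pos y).trans_le h)).2 h

lemma log_le_arcosh_sub {x ℓ K : ℝ} (hℓ : 0 ≤ ℓ) (hK : 1 ≤ K)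
    (h : K * exp ℓ + (K * exp ℓ)⁻¹ ≤ 2 * x) : log K ≤ arcosh x - ℓ := by
  have hcosh : cosh (ℓ + log K) = (K * exp ℓ + (K * exp ℓ)⁻¹) / 2 := by
    rw [cosh_eq, exp_add, exp_neg, exp_add, exp_log (by linarith), mul_comm]
  linarith [le_arcosh_of_cosh_le (x := x) (add_nonneg hℓ (log_nonneg hK)) (by linarith)]

/-- `cosh (ℓ + log K) ≤ (4 cosh ℓ + 1) / 3` for `e = exp ℓ ≤ E`, checked at `E` only: after
multiplying by `3 K e` it says that `(3K² - 4K) t² - 2K t + 3 - 4K` is nonpositive at `t = e`,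
and this quadratic is convex and negative at `0`. -/
lemma mul_add_inv_le {e E K : ℝ} (he : 0 < e) (heE : e ≤ E) (hK : 4 / 3 ≤ K)
    (h : 3 * K ^ 2 * E ^ 2 + 3 ≤ 4 * K * E ^ 2 + 2 * K * E + 4 * K) :
    K * e + (K * e)⁻¹ ≤ 2 * ((4 * ((e + e⁻¹) / 2) + 1) / 3) := by
  have hE : 0 < E := he.trans_le heE
  have hα : 0 ≤ 3 * K ^ 2 - 4 * K := by nlinarith
  have hq : 3 * K ^ 2 * e ^ 2 + 3 ≤ 4 * K * e ^ 2 + 2 * K * e + 4 * K := by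
    nlinarith [mul_nonneg (mul_nonneg hα (mul_nonneg he.le hE.le)) (sub_nonneg.2 heE),
      mul_le_mul_of_nonneg_left h he.le]
  have hKe : 0 < K * e := by positivity
  have hdiff : 2 * ((4 * ((e + e⁻¹) / 2) + 1) / 3) - (K * e + (K * e)⁻¹)
      = (4 * K * e ^ 2 + 2 * K * e + 4 * K - (3 * K ^ 2 * e ^ 2 + 3)) / (3 * K * e) := by
    field_simp; ring
  rw [← sub_nonneg, hdiff]
  apply div_nonneg <;> nlinarith

noncomputable def sqrtRatio (c : ℝ) : ℝ := √((2 * c - 1) / (2 * c - 2))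

lemma sqrtRatio_eq {c : ℝ} (hc : 1 < c) : sqrtRatio c = √(1 + 1 / (2 * c - 2)) := by
  rw [sqrtRatio, show 2 * c - 1 = 2 * c - 2 + 1 by ring, same_add_div (by linarith)]

lemma sqrtRatio_le {c d S : ℝ} (hd : 0 < d) (hdc : d ≤ 2 * c - 2) (hS : 0 ≤ S)
    (h : 1 + 1 / d ≤ S ^ 2) : sqrtRatio c ≤ S := by
  rw [sqrtRatio_eq (by linarith), sqrt_le_left hS]
  calc 1 + 1 / (2 * c - 2) ≤ 1 + 1 / d := by gcongr
    _ ≤ S ^ 2 := h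

lemma le_sqrtRatio {c d S : ℝ} (hc : 1 < c) (hcd : 2 * c - 2 ≤ d)
    (h : S ^ 2 ≤ 1 + 1 / d) : S ≤ sqrtRatio c := by
  rw [sqrtRatio_eq hc]
  refine (le_abs_self S).trans (abs_le_sqrt ?_)
  calc S ^ 2 ≤ 1 + 1 / d := h
    _ ≤ 1 + 1 / (2 * c - 2) := by gcongr; linarith

noncomputable def muffinCollarVolDivPi (ℓ : ℝ) : ℝ :=
  ℓ + (2 - sqrtRatio (cosh ℓ)) * sinh ℓ
    + sqrtRatio (cosh ℓ) * (arcosh ((4 * cosh ℓ + 1) / 3) - ℓ)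

lemma muffinCollarVol_eq_pi_mul (ℓ : ℝ) :
    muffinCollarVol ℓ = π * muffinCollarVolDivPi ℓ := by
  rw [muffinCollarVol, muffinCollarVolDivPi, sqrtRatio, arcosh]; ring

lemma le_muffinCollarVolDivPi {ℓ E₀ S S' K : ℝ} (hE₀ : 1 < E₀) (h₀ : E₀ ≤ exp ℓ) (hS : 0 ≤ S)
    (hS2 : S ≤ 2) (hSE : 1 + 1 / (E₀ + E₀⁻¹ - 2) ≤ S ^ 2) (hS' : S' ≤ sqrtRatio (cosh ℓ))
    (hK : 1 ≤ K) (hKℓ : K * exp ℓ + (K * exp ℓ)⁻¹ ≤ 2 * ((4 * cosh ℓ + 1) / 3)) :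
    log E₀ + (2 - S) * ((E₀ - E₀⁻¹) / 2) + S' * log K ≤ muffinCollarVolDivPi ℓ := by
  have hℓ : log E₀ ≤ ℓ := (log_le_iff_le_exp (by linarith)).2 h₀
  have hsinh : (E₀ - E₀⁻¹) / 2 ≤ sinh ℓ := by
    rw [sinh_eq, exp_neg]; gcongr
  have hP : 0 ≤ (E₀ - E₀⁻¹) / 2 := by linarith [inv_lt_one_of_one_lt₀ hE₀]
  have hd : 0 < E₀ + E₀⁻¹ - 2 := by
    rw [show E₀ + E₀⁻¹ - 2 = (E₀ - 1) ^ 2 / E₀ by field_simp; ring]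
    exact div_pos (pow_pos (sub_pos.2 hE₀) 2) (by linarith)
  have hσ : sqrtRatio (cosh ℓ) ≤ S := by
    refine sqrtRatio_le hd ?_ hS hSE
    rw [cosh_eq, exp_neg]; linarith [add_inv_le_add_inv hE₀.le h₀]
  have hD := log_le_arcosh_sub ((log_pos hE₀).le.trans hℓ) hK hKℓ
  have hp := mul_le_mul (by linarith : 2 - S ≤ 2 - sqrtRatio (cosh ℓ)) hsinh hP
    (by linarith)
  have hq := mul_le_mul hS' hD (log_nonneg hK) (sqrt_nonneg _)
  rw [muffinCollarVolDivPi]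
  linarith

lemma le_muffinCollarVolDivPi_of_exp_mem_Icc {ℓ E₀ E₁ S S' K : ℝ} (hE₀ : 1 < E₀)
    (h₀ : E₀ ≤ exp ℓ) (h₁ : exp ℓ ≤ E₁) (hS : 0 ≤ S) (hS2 : S ≤ 2)
    (hSE : 1 + 1 / (E₀ + E₀⁻¹ - 2) ≤ S ^ 2) (hS'E : S' ^ 2 ≤ 1 + 1 / (E₁ + E₁⁻¹ - 2))
    (hK : 4 / 3 ≤ K) (hKE : 3 * K ^ 2 * E₁ ^ 2 + 3 ≤ 4 * K * E₁ ^ 2 + 2 * K * E₁ + 4 * K) :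
    log E₀ + (2 - S) * ((E₀ - E₀⁻¹) / 2) + S' * log K ≤ muffinCollarVolDivPi ℓ := by
  have he : 1 < exp ℓ := hE₀.trans_le h₀
  have hc : cosh ℓ = (exp ℓ + (exp ℓ)⁻¹) / 2 := by rw [cosh_eq, exp_neg]
  refine le_muffinCollarVolDivPi hE₀ h₀ hS hS2 hSE (le_sqrtRatio ?_ ?_ hS'E) (by linarith) ?_
  · exact one_lt_cosh.2 (one_lt_exp_iff.1 he).ne'
  · rw [hc]; linarith [add_inv_le_add_inv he.le h₁]
  · rw [hc]; exact mul_add_inv_le (by positivity) h₁ hK hKE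

lemma le_muffinCollarVolDivPi_of_le_exp {ℓ E₀ S : ℝ} (hE₀ : 1 < E₀) (h₀ : E₀ ≤ exp ℓ)
    (hS : 0 ≤ S) (hS2 : S ≤ 2) (hSE : 1 + 1 / (E₀ + E₀⁻¹ - 2) ≤ S ^ 2) :
    log E₀ + (2 - S) * ((E₀ - E₀⁻¹) / 2) + log (4 / 3) ≤ muffinCollarVolDivPi ℓ := by
  have hc : 1 < cosh ℓ := one_lt_cosh.2 (one_lt_exp_iff.1 (hE₀.trans_le h₀)).ne'
  have h := le_muffinCollarVolDivPi (S' := 1) (K := 4 / 3) hE₀ h₀ hS hS2 hSE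
    (le_sqrtRatio hc le_rfl (by simp)) (by norm_num) ?_
  · simpa using h
  · rw [cosh_eq, exp_neg, mul_inv]
    linarith [inv_pos.2 (exp_pos ℓ)]

lemma muffinCollarVolDivPi_gt {ℓ : ℝ} (h : 2.473 ≤ exp ℓ) : 2.1932 < muffinCollarVolDivPi ℓ := by
  rcases le_or_gt (exp ℓ) 2.6 with h₁ | h₁
  · have := le_muffinCollarVolDivPi_of_exp_mem_Icc (S := 1.463) (S' := 1.419) (K := 1.698)
      (by norm_num) h h₁ (by norm_num) (by norm_num) (by norm_num) (by norm_num) (by norm_num)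
      (by norm_num)
    linarith [two_mul_add_cube_le_log (x := 2.473) (by norm_num),
      two_mul_add_cube_le_log (x := 1.698) (by norm_num)]
  rcases le_or_gt (exp ℓ) 3.1 with h₂ | h₂
  · have := le_muffinCollarVolDivPi_of_exp_mem_Icc (S := 1.42) (S' := 1.304) (K := 1.622)
      (by norm_num) h₁.le h₂ (by norm_num) (by norm_num) (by norm_num) (by norm_num)
      (by norm_num) (by norm_num)
    linarith [two_mul_add_cube_le_log (x := 2.6) (by norm_num),
      two_mul_add_cube_le_log (x := 1.622) (by norm_num)]
  · have := le_muffinCollarVolDivPi_of_le_exp (S := 1.305) (by norm_num) h₂.le (by norm_num)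
      (by norm_num) (by norm_num)
    linarith [two_mul_add_cube_le_log (x := 3.1) (by norm_num),
      two_mul_add_cube_le_log (x := 4 / 3) (by norm_num)]

/-- Quantitative step in the proof of Proposition 3.1: V(ℓ) > 6.89 whenever
ℓ > 0 and cosh ℓ ≥ 1.439. -/
theorem stmt_10 (ℓ : ℝ) (hℓ : 0 < ℓ) (h : Real.cosh ℓ ≥ 1.439) :
    muffinCollarVol ℓ > 6.89 := by
  have he : 2.473 ≤ exp ℓ := by
    have h1 : 1 ≤ exp ℓ := one_le_exp hℓ.le
    rw [cosh_eq, exp_neg] at h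
    nlinarith [mul_inv_cancel₀ (exp_pos ℓ).ne']
  rw [muffinCollarVol_eq_pi_mul]
  nlinarith [muffinCollarVolDivPi_gt he, pi_gt_d6]
end

section
/- Let F be the free group on two generators x and y. Then the subgroup of F generated by {x, y·x⁻¹·y²} is a proper subgroup of F, and the subgroup of F generated by {x, y⁻¹·x⁻¹·y²} is a proper subgroup of F. (This is the claim used in Lemma 5.4: neither of the pairs (x, y x⁻¹ y²) or (x, y⁻¹ x⁻¹ y²) generates the free group on x and y, so the inclusion homomorphism π₁(Z₀) → π₁(Y) is not surjective.) -/
/-!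
Send `x ↦ (2 3)` and `y ↦ (0 1 2 3)` into `S₄`. Both `x` and `y x⁻¹ y²` then fix `0`, and both
`x` and `y⁻¹ x⁻¹ y²` fix `1`, while `y` moves every point; so each pair generates a subgroup of
the preimage of a point stabilizer, which misses `y`.
-/

theorem Subgroup.closure_ne_top_of_map_mem {G H : Type*} [Group G] [Group H] (φ : G →* H)
    (K : Subgroup H) {s : Set G} (hs : ∀ g ∈ s, φ g ∈ K) {g : G} (hg : φ g ∉ K) :
    closure s ≠ ⊤ := by
  intro htop
  have hle : closure s ≤ K.comap φ := (closure_le _).2 hs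
  exact hg (hle (htop ▸ mem_top g))

theorem Subgroup.closure_pair_ne_top_of_fixed {G α : Type*} [Group G] (φ : G →* Equiv.Perm α)
    {a w g : G} (p : α) (ha : φ a p = p) (hw : φ w p = p) (hg : φ g p ≠ p) :
    closure {a, w} ≠ ⊤ := by
  refine closure_ne_top_of_map_mem φ (MulAction.stabilizer _ p) ?_ hg
  rintro h (rfl | rfl) <;> assumption

/-- Claim used in Lemma 5.4: neither of the pairs (x, y x⁻¹ y²) or
(x, y⁻¹ x⁻¹ y²) generates the free group on x and y. -/
theorem stmt_13 :
    let x : FreeGroup (Fin 2) := FreeGroup.of 0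
    let y : FreeGroup (Fin 2) := FreeGroup.of 1
    Subgroup.closure ({x, y * x⁻¹ * y ^ 2} : Set (FreeGroup (Fin 2))) ≠ ⊤ ∧
      Subgroup.closure ({x, y⁻¹ * x⁻¹ * y ^ 2} : Set (FreeGroup (Fin 2))) ≠ ⊤ := by
  intro x y
  let φ : FreeGroup (Fin 2) →* Equiv.Perm (Fin 4) := FreeGroup.lift ![Equiv.swap 2 3, finRotate 4]
  have hx : φ x = Equiv.swap 2 3 := FreeGroup.lift_apply_of
  have hy : φ y = finRotate 4 := FreeGroup.lift_apply_of
  constructor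
  · refine Subgroup.closure_pair_ne_top_of_fixed φ (g := y) 0 ?_ ?_ ?_ <;>
      simp only [map_mul, map_inv, map_pow, hx, hy] <;> decide
  · refine Subgroup.closure_pair_ne_top_of_fixed φ (g := y) 1 ?_ ?_ ?_ <;>
      simp only [map_mul, map_inv, map_pow, hx, hy] <;> decide
end

section
/- Let F be the free group on two generators x and y. Then none of the five elements x, y·x⁻¹·y², x⁻¹·y·x⁻¹·y², y⁻¹·x⁻¹·y², x⁻¹·y⁻¹·x⁻¹·y² is a proper power in F; that is, for each such element w, there are no g ∈ F and integer n with |n| ≥ 2 such that g^n = w. (This is the final claim in the proof of Lemma 5.4: none of the elements x, y x⁻¹ y², x⁻¹ y x⁻¹ y², y⁻¹ x⁻¹ y², x⁻¹ y⁻¹ x⁻¹ y² is a proper power in the free group on x and y.) -/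
/-!
A homomorphism `f : G →* ℤ` sends `g ^ n` into `nℤ`, so an element sent to a generator of `ℤ` is
not a proper power. Each of the five words has exponent sum `1` for suitable
integer weights on `x` and `y`.
-/

theorem not_exists_zpow_eq_of_map_eq_ofAdd_one {G : Type*} [Group G]
    (f : G →* Multiplicative ℤ) {w : G} (hw : f w = Multiplicative.ofAdd 1) :
    ¬ ∃ (g : G) (n : ℤ), 2 ≤ |n| ∧ g ^ n = w := by
  rintro ⟨g, n, hn, rfl⟩
  have hunit : n * (f g).toAdd = 1 := by
    simpa [toAdd_zpow, mul_comm] using congrArg Multiplicative.toAdd hw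
  rcases Int.isUnit_iff.mp (IsUnit.of_mul_eq_one _ hunit) with rfl | rfl <;> norm_num at hn

namespace FreeGroup

def weightedExponentSum {α : Type*} (c : α → ℤ) : FreeGroup α →* Multiplicative ℤ :=
  lift (Multiplicative.ofAdd ∘ c)

@[simp]
theorem weightedExponentSum_of {α : Type*} (c : α → ℤ) (a : α) :
    weightedExponentSum c (of a) = Multiplicative.ofAdd (c a) :=
  lift_apply_of

end FreeGroup

/-- Final claim in the proof of Lemma 5.4: none of the elements x, y x⁻¹ y²,
x⁻¹ y x⁻¹ y², y⁻¹ x⁻¹ y², x⁻¹ y⁻¹ x⁻¹ y² is a proper power in the free group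
on x and y. -/
theorem stmt_14 :
    let x : FreeGroup (Fin 2) := FreeGroup.of 0
    let y : FreeGroup (Fin 2) := FreeGroup.of 1
    ∀ w ∈ ({x, y * x⁻¹ * y ^ 2, x⁻¹ * y * x⁻¹ * y ^ 2, y⁻¹ * x⁻¹ * y ^ 2,
        x⁻¹ * y⁻¹ * x⁻¹ * y ^ 2} : Set (FreeGroup (Fin 2))),
      ¬ ∃ (g : FreeGroup (Fin 2)) (n : ℤ), 2 ≤ |n| ∧ g ^ n = w := by
  intro x y w hw
  have of_weights (a b : ℤ) (h : FreeGroup.weightedExponentSum ![a, b] w = .ofAdd 1) :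
      ¬ ∃ (g : FreeGroup (Fin 2)) (n : ℤ), 2 ≤ |n| ∧ g ^ n = w :=
    not_exists_zpow_eq_of_map_eq_ofAdd_one _ h
  simp only [Set.mem_insert_iff, Set.mem_singleton_iff] at hw
  rcases hw with rfl | rfl | rfl | rfl | rfl
  · exact of_weights 1 0 (by simp [x])
  · exact of_weights 2 1 (by simp [x, y]; rfl)
  · exact of_weights 1 1 (by simp [x, y]; rfl)
  · exact of_weights 0 1 (by simp [x, y]; rfl)
  · exact of_weights 0 1 (by simp [x, y]; rfl)
end

section
/- Let F₃ be the free group on three generators t, u₁, u₂ and let G be the quotient of F₃ by the normal closure of the single element t²·u₁·t·u₂ (i.e., the presented group ⟨t, u₁, u₂ : t²u₁tu₂ = 1⟩). Then the homomorphism from the free group on two generators a, b to G determined by a ↦ [u₁] and b ↦ [t]⁻¹ (where [·] denotes the image in G) is a group isomorphism. In particular, G is free of rank 2, freely generated by x := [u₁] and y := [t]⁻¹, and in G one has [u₂] = y·x⁻¹·y². (This is the 'theta case' of the presentation analysis in the proof of Lemma 5.2: the group with presentation |t,u₁,u₂ : t²u₁tu₂ = 1| is free on the generators ū₁ and t̄⁻¹,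 with ū₂ = y x⁻¹ y².) -/
/-!
The relator t²u₁tu₂ contains u₂ exactly once, so it expresses u₂ = t⁻¹u₁⁻¹t⁻² in terms of the
other generators; eliminating u₂ (a Tietze move) leaves the free group on t and u₁. Concretely,
t ↦ b⁻¹, u₁ ↦ a, u₂ ↦ b a⁻¹ b² kills the relator, and the induced map is inverse to `thetaMap`.
-/

/-- The single relator t²u₁tu₂ of the 'theta case' presentation. -/
def thetaRels : Set (FreeGroup (Fin 3)) :=
  {FreeGroup.of 0 ^ 2 * FreeGroup.of 1 * FreeGroup.of 0 * FreeGroup.of 2}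

/-- The homomorphism from the free group on two generators a, b to the presented
group ⟨t, u₁, u₂ : t²u₁tu₂ = 1⟩ determined by a ↦ [u₁] and b ↦ [t]⁻¹. -/
noncomputable def thetaMap : FreeGroup (Fin 2) →* PresentedGroup thetaRels :=
  FreeGroup.lift (fun i =>
    if i = 0 then PresentedGroup.mk thetaRels (FreeGroup.of 1)
    else (PresentedGroup.mk thetaRels (FreeGroup.of 0))⁻¹)

open PresentedGroup

theorem thetaRels_relation :
    of (rels := thetaRels) 0 ^ 2 * of 1 * of 0 * of 2 = 1 := by
  simpa [PresentedGroup.of] using one_of_mem (rels := thetaRels) rfl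

theorem thetaRels_of_two :
    of (rels := thetaRels) 2 = (of 0)⁻¹ * (of 1)⁻¹ * ((of 0)⁻¹) ^ 2 := by
  rw [eq_inv_of_mul_eq_one_right thetaRels_relation]
  group

noncomputable def thetaInv : PresentedGroup thetaRels →* FreeGroup (Fin 2) :=
  toGroup (f := ![(FreeGroup.of 1)⁻¹, FreeGroup.of 0,
      FreeGroup.of 1 * (FreeGroup.of 0)⁻¹ * FreeGroup.of 1 ^ 2])
    (by rintro r rfl; simp; group)

@[simp]
theorem thetaMap_of_zero : thetaMap (FreeGroup.of 0) = of 1 :=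
  FreeGroup.lift_apply_of

@[simp]
theorem thetaMap_of_one : thetaMap (FreeGroup.of 1) = (of 0)⁻¹ :=
  FreeGroup.lift_apply_of

@[simp]
theorem thetaInv_of (i : Fin 3) :
    thetaInv (of i) = ![(FreeGroup.of 1)⁻¹, FreeGroup.of 0,
      FreeGroup.of 1 * (FreeGroup.of 0)⁻¹ * FreeGroup.of 1 ^ 2] i :=
  toGroup.of _

theorem thetaInv_comp_thetaMap : thetaInv.comp thetaMap = MonoidHom.id _ := by
  ext i
  fin_cases i <;> simp

theorem thetaMap_comp_thetaInv : thetaMap.comp thetaInv = MonoidHom.id _ := by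
  refine PresentedGroup.ext fun i => ?_
  fin_cases i <;> simp [thetaRels_of_two]

noncomputable def thetaEquiv : FreeGroup (Fin 2) ≃* PresentedGroup thetaRels :=
  thetaMap.toMulEquiv thetaInv thetaInv_comp_thetaMap thetaMap_comp_thetaInv

/-- 'Theta case' of the presentation analysis in the proof of Lemma 5.2: the
group ⟨t,u₁,u₂ : t²u₁tu₂ = 1⟩ is free on x = [u₁] and y = [t]⁻¹, and
[u₂] = y x⁻¹ y². -/
theorem stmt_15 :
    Function.Bijective thetaMap ∧
      PresentedGroup.mk thetaRels (FreeGroup.of 2)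
        = (PresentedGroup.mk thetaRels (FreeGroup.of 0))⁻¹
            * (PresentedGroup.mk thetaRels (FreeGroup.of 1))⁻¹
            * ((PresentedGroup.mk thetaRels (FreeGroup.of 0))⁻¹) ^ 2 :=
  ⟨thetaEquiv.bijective, thetaRels_of_two⟩
end
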